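/- arXiv:1712.10138 — 9 statements merged into one kernel-verified Lean document; each statement's English description precedes it below -/
import Mathlib

section
/- If m and n are nonnegative integers with n ≡ m (mod 4) and m ≤ n, then F_n - F_m = F_{(n-m)/2} · L_{(n+m)/2}. -/
def lucas : ℕ → ℕ
  | 0 => 2
  | 1 => 1
  | n + 2 => lucas (n + 1) + lucas n

lemma lucas_succ_eq (a : ℕ) : lucas (a + 1) = Nat.fib a + Nat.fib (a + 2) := by
  induction a using Nat.twoStepInduction with
  | zero => simp [lucas]
  | one => simp [lucas, Nat.fib_add_two]
  | more a ih1 ih2 =>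
    show lucas (a + 2 + 1) = _
    rw [lucas, ih1, ih2]
    simp [Nat.fib_add_two]
    ring
  
lemma key (j a : ℕ) : (Nat.fib j : ℤ) * lucas (a + j) =
    Nat.fib (a + 2 * j) - (-1 : ℤ)^j * Nat.fib a := by
  induction j using Nat.twoStepInduction generalizing a with
  | zero => simp
  | one =>
    simp only [Nat.fib_one, Nat.cast_one, one_mul, pow_one, lucas_succ_eq]
    push_cast
    ring
  | more j ih1 ih2 =>
    have e1 := ih2 (a + 1)
    have e2 := ih1 (a + 2)
    have hl : lucas (a + (j + 2)) = lucas (a + 1 + (j + 1)) := by ring_nf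
    have hl2 : lucas (a + 1 + (j + 1)) = lucas (a + 2 + j) := by ring_nf
    have hf : Nat.fib (j + 2) = Nat.fib (j + 1) + Nat.fib j := by
      rw [Nat.fib_add_two]; ring
    have hfa : (Nat.fib (a + 2) : ℤ) = Nat.fib (a + 1) + Nat.fib a := by
      rw [Nat.fib_add_two]; push_cast; ring
    have h1 : a + 1 + 2 * (j + 1) = a + 2 * j + 3 := by ring
    have h2 : a + 2 + 2 * j = a + 2 * j + 2 := by ring
    have h3 : a + 2 * (j + 2) = a + 2 * j + 4 := by ring
    have h4 : (Nat.fib (a + 2 * j + 4) : ℤ) =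
        Nat.fib (a + 2 * j + 3) + Nat.fib (a + 2 * j + 2) := by
      rw [show a + 2 * j + 4 = (a + 2 * j + 2) + 2 by ring, Nat.fib_add_two]
      push_cast; ring
    rw [hl, hl2, hf, h3, h4]
    rw [h1] at e1
    rw [h2] at e2
    push_cast [hf] at e1 e2 ⊢
    rw [hl2] at e1
    have hp1 : (-1 : ℤ)^(j+1) = -(-1 : ℤ)^j := by rw [pow_succ]; ring
    have hp2 : (-1 : ℤ)^(j+2) = (-1 : ℤ)^j := by rw [pow_succ, pow_succ]; ring
    rw [hp1] at e1
    rw [hp2]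
    linear_combination e1 + e2 - (-1 : ℤ)^j * hfa

theorem fib_sub_fib_of_mod_four_eq (m n : ℕ) (hmn : m ≤ n) (h : n % 4 = m % 4) :
    Nat.fib n - Nat.fib m = Nat.fib ((n - m) / 2) * lucas ((n + m) / 2) := by
  have hd : 4 ∣ n - m := by omega
  obtain ⟨t, ht⟩ := hd
  have hn : n = m + 4 * t := by omega
  subst hn
  have h1 : (m + 4 * t - m) / 2 = 2 * t := by omega
  have h2 : (m + 4 * t + m) / 2 = m + 2 * t := by omega
  rw [h1, h2]
  have hk := key (2 * t) m
  have hmono : Nat.fib m ≤ Nat.fib (m + 4 * t) := Nat.fib_mono (by omega)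
  have hpow : ((-1 : ℤ))^(2 * t) = 1 := by
    rw [pow_mul]; norm_num
  rw [hpow, one_mul] at hk
  have : m + 2 * (2 * t) = m + 4 * t := by ring
  rw [this, show m + 2 * t = m + 2 * t from rfl] at hk
  zify [hmono]
  linarith [hk]
end

section
/- If m and n are nonnegative integers with n ≡ m + 2 (mod 4) and m ≤ n, then F_n - F_m = F_{(n+m)/2} · L_{(n-m)/2}. -/
lemma add_norm (a : ℕ) : a + 1 + 1 = a + 2 ∧ a + 2 + 1 = a + 3 ∧ a + 1 + 2 = a + 3 ∧
    a + 3 + 1 = a + 4 ∧ a + 2 + 2 = a + 4 := by omega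

lemma lucas_pair : ∀ n, lucas (n + 1) = Nat.fib n + Nat.fib (n + 2) ∧
    lucas (n + 2) = Nat.fib (n + 1) + Nat.fib (n + 3) := by
  intro n
  induction n with
  | zero => simp [lucas, Nat.fib_add_two]
  | succ k ih =>
    simp only [(add_norm k).1, (add_norm k).2.1, (add_norm k).2.2.1]
    refine ⟨ih.2, ?_⟩
    show lucas (k + 2) + lucas (k + 1) = _
    rw [ih.1, ih.2]
    have hf1 := Nat.fib_add_two (n := k)
    have hf2 := Nat.fib_add_two (n := k + 1)
    have hf3 := Nat.fib_add_two (n := k + 2)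
    simp only [(add_norm k).1, (add_norm k).2.1, (add_norm k).2.2.2.1, (add_norm k).2.2.2.2] at *
    linarith

lemma cassini (n : ℕ) : (Nat.fib (n + 1) : ℤ)^2 - Nat.fib n * Nat.fib (n + 2) = (-1)^n := by
  induction n with
  | zero => simp
  | succ k ih =>
    simp only [(add_norm k).1, (add_norm k).2.1, (add_norm k).2.2.1]
    have h2 : (Nat.fib (k + 2) : ℤ) = Nat.fib k + Nat.fib (k + 1) := by
      rw [Nat.fib_add_two]; push_cast; ring
    have h3 : (Nat.fib (k + 3) : ℤ) = Nat.fib (k + 1) + Nat.fib (k + 2) := by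
      rw [show k + 3 = (k + 1) + 2 from rfl, Nat.fib_add_two, (add_norm k).1]
      push_cast; ring
    rw [pow_succ]
    linear_combination (-1 : ℤ) * ih + (Nat.fib (k+2) : ℤ) * h2 - (Nat.fib (k+1) : ℤ) * h3

lemma catalan_pair : ∀ a b : ℕ,
    ((Nat.fib (a + b) : ℤ) * Nat.fib (b + 1) - Nat.fib (a + b + 1) * Nat.fib b = (-1)^b * Nat.fib a)
    ∧ ((Nat.fib (a + 1 + b) : ℤ) * Nat.fib (b + 1) - Nat.fib (a + 1 + b + 1) * Nat.fib b
        = (-1)^b * Nat.fib (a + 1)) := by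
  intro a b
  induction a with
  | zero =>
    constructor
    · simp [mul_comm]
    · have := cassini b
      simp only [zero_add, Nat.fib_one, Nat.cast_one, mul_one]
      rw [show 1 + b = b + 1 by omega, show b + 1 + 1 = b + 2 by omega]
      linear_combination this
  | succ k ih =>
    constructor
    · exact ih.2
    · have h1 : (Nat.fib (k + 1 + 1 + b) : ℤ) = Nat.fib (k + b) + Nat.fib (k + 1 + b) := by
        rw [show k + 1 + 1 + b = (k + b) + 2 by omega, Nat.fib_add_two,
          show k + b + 1 = k + 1 + b by omega]
        push_cast; ring
      have h2 : (Nat.fib (k + 1 + 1 + b + 1) : ℤ)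
          = Nat.fib (k + b + 1) + Nat.fib (k + 1 + b + 1) := by
        rw [show k + 1 + 1 + b + 1 = (k + b + 1) + 2 by omega, Nat.fib_add_two,
          show k + b + 1 + 1 = k + 1 + b + 1 by omega]
        push_cast; ring
      have h3 : (Nat.fib (k + 1 + 1) : ℤ) = Nat.fib k + Nat.fib (k + 1) := by
        rw [show k + 1 + 1 = k + 2 from rfl, Nat.fib_add_two]; push_cast; ring
      linear_combination ih.1 + ih.2 + (Nat.fib (b+1) : ℤ) * h1 - (Nat.fib b : ℤ) * h2
        - (-1:ℤ)^b * h3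

lemma key_s5 (m k : ℕ) :
    Nat.fib (m + 4 * k + 2) = Nat.fib m + Nat.fib (m + 2 * k + 1) * lucas (2 * k + 1) := by
  have hcat := (catalan_pair m (2 * k)).1
  have heven : ((-1 : ℤ))^(2*k) = 1 := by
    rw [pow_mul]; norm_num
  rw [heven, one_mul] at hcat
  have hadd : Nat.fib (m + 4 * k + 2) =
      Nat.fib (m + 2*k) * Nat.fib (2*k + 1) + Nat.fib (m + 2*k + 1) * Nat.fib (2*k + 2) := by
    have h := Nat.fib_add (m + 2*k) (2*k + 1)
    rw [show m + 2*k + (2*k+1) + 1 = m + 4*k + 2 by omega, show 2*k+1+1 = 2*k+2 by omega] at h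
    exact h
  have hl := (lucas_pair (2*k)).1
  have : (Nat.fib (m + 4 * k + 2) : ℤ)
      = Nat.fib m + Nat.fib (m + 2 * k + 1) * lucas (2 * k + 1) := by
    rw [hadd, hl]
    push_cast
    linear_combination hcat
  exact_mod_cast this

theorem fib_sub_fib_of_mod_four_add_two (m n : ℕ) (hmn : m ≤ n) (h : n % 4 = (m + 2) % 4) :
    Nat.fib n - Nat.fib m = Nat.fib ((n + m) / 2) * lucas ((n - m) / 2) := by
  obtain ⟨k, hk⟩ : ∃ k, n = m + 4 * k + 2 := ⟨(n - m - 2) / 4, by omega⟩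
  subst hk
  have h1 : (m + 4 * k + 2 + m) / 2 = m + 2 * k + 1 := by omega
  have h2 : (m + 4 * k + 2 - m) / 2 = 2 * k + 1 := by omega
  rw [h1, h2, key_s5 m k]
  omega
end

section
/- For all nonnegative integers n and a, if L_n = 2^a then n = 0, n = 1 (with a = 0), or n = 3 (with a = 2); in particular the only powers of 2 in the Lucas sequence are L_0 = 2, L_1 = 1, and L_3 = 4. -/
lemma lucas_pos_pair : ∀ n, 1 ≤ lucas n ∧ 1 ≤ lucas (n + 1) := by
  intro n
  induction n with
  | zero => exact ⟨by norm_num [lucas], by norm_num [lucas]⟩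
  | succ k ih =>
    refine ⟨ih.2, ?_⟩
    show 1 ≤ lucas (k + 1) + lucas k
    omega

lemma lucas_ge_pair : ∀ n, n ≤ lucas n ∧ n + 1 ≤ lucas (n + 1) := by
  intro n
  induction n with
  | zero => exact ⟨by norm_num [lucas], by norm_num [lucas]⟩
  | succ k ih =>
    refine ⟨ih.2, ?_⟩
    have := (lucas_pos_pair k).1
    show k + 2 ≤ lucas (k + 1) + lucas k
    omega

lemma lucas_per_pair : ∀ n, lucas (n + 12) % 8 = lucas n % 8 ∧
    lucas (n + 13) % 8 = lucas (n + 1) % 8 := by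
  intro n
  induction n with
  | zero => exact ⟨by decide, by decide⟩
  | succ k ih =>
    refine ⟨ih.2, ?_⟩
    have h1 : lucas (k + 14) = lucas (k + 13) + lucas (k + 12) := rfl
    have h2 : lucas (k + 2) = lucas (k + 1) + lucas k := rfl
    rw [show k + 1 + 13 = k + 14 from rfl, show k + 1 + 1 = k + 2 from rfl, h1, h2,
      Nat.add_mod, ih.1, ih.2, ← Nat.add_mod]

lemma lucas_mod8_ne : ∀ n, lucas n % 8 ≠ 0 := by
  intro n
  obtain ⟨q, r, hr, rfl⟩ : ∃ q r, r < 12 ∧ n = 12 * q + r :=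
    ⟨n / 12, n % 12, Nat.mod_lt _ (by norm_num), (Nat.div_add_mod n 12).symm⟩
  induction q with
  | zero =>
    simp only [Nat.mul_zero, Nat.zero_add]
    interval_cases r <;> decide
  | succ k ih =>
    have : 12 * (k + 1) + r = (12 * k + r) + 12 := by ring
    rw [this, (lucas_per_pair _).1]
    exact ih

theorem lucas_pow_two (n a : ℕ) (h : lucas n = 2 ^ a) :
    n = 0 ∨ (n = 1 ∧ a = 0) ∨ (n = 3 ∧ a = 2) := by
  have ha : a ≤ 2 := by
    by_contra hc
    push_neg at hc
    have : 8 ∣ 2 ^ a := by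
      have : (2:ℕ) ^ 3 ∣ 2 ^ a := pow_dvd_pow 2 hc
      simpa using this
    have := lucas_mod8_ne n
    omega
  have hle : lucas n ≤ 4 := by
    rw [h]
    calc 2 ^ a ≤ 2 ^ 2 := Nat.pow_le_pow_right (by norm_num) ha
    _ = 4 := by norm_num
  have hn : n ≤ 4 := by
    have := (lucas_ge_pair n).1
    omega
  interval_cases n <;> interval_cases a <;> simp_all [lucas]
end

section
/- The only solutions in nonnegative integers m and a of F_m = 2^a are (m,a) ∈ {(1,0),(2,0),(3,1),(6,3)}. -/
theorem fib_eq_pow_two (m a : ℕ) :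
    Nat.fib m = 2 ^ a ↔ (m, a) ∈ ({(1,0),(2,0),(3,1),(6,3)} : Set (ℕ × ℕ)) := by
  constructor
  · intro h
    rcases Nat.lt_or_ge m 7 with hm | hm
    · -- small cases
      interval_cases m <;> simp [Nat.fib] at h ⊢
      · -- m = 0 : 0 = 2^a impossible
        exact absurd h.symm (pow_ne_zero a two_ne_zero)
      · -- m = 1
        have : a = 0 := by
          by_contra hc
          have : (2:ℕ)^1 ≤ 2^a := Nat.pow_le_pow_right (by norm_num) (by omega)
          omega
        simp [this]
      · have : a = 0 := by
          by_contra hc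
          have : (2:ℕ)^1 ≤ 2^a := Nat.pow_le_pow_right (by norm_num) (by omega)
          omega
        simp [this]
      · -- m = 3 : 2 = 2^a
        have : a = 1 := Nat.pow_right_injective (le_refl 2) (show (2:ℕ)^a = 2^1 by omega)
        simp [this]
      · -- m = 4 : 3 = 2^a
        exfalso
        have ha : a < 2 := by
          by_contra hc
          have : (2:ℕ)^2 ≤ 2^a := Nat.pow_le_pow_right (by norm_num) (by omega)
          omega
        interval_cases a <;> omega
      · -- m = 5 : 5 = 2^a
        exfalso
        have ha : a < 3 := by
          by_contra hc
          have : (2:ℕ)^3 ≤ 2^a := Nat.pow_le_pow_right (by norm_num) (by omega)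
          omega
        interval_cases a <;> omega
      · -- m = 6 : 8 = 2^a
        have : a = 3 := Nat.pow_right_injective (le_refl 2) (show (2:ℕ)^a = 2^3 by omega)
        simp [this]
    · -- m ≥ 7
      exfalso
      have h13 : 13 ≤ Nat.fib m := by
        calc (13:ℕ) = Nat.fib 7 := by norm_num
        _ ≤ Nat.fib m := Nat.fib_mono hm
      have ha4 : 4 ≤ a := by
        by_contra hc
        have : (2:ℕ)^a ≤ 2^3 := Nat.pow_le_pow_right (by norm_num) (by omega)
        omega
      have h16 : 16 ∣ Nat.fib m := by
        rw [h]
        calc (16:ℕ) = 2^4 := by norm_num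
        _ ∣ 2^a := pow_dvd_pow 2 ha4
      have h16' : 16 ∣ Nat.fib (Nat.gcd m 12) := by
        rw [Nat.fib_gcd]
        exact Nat.dvd_gcd h16 (by norm_num)
      have hg : Nat.gcd m 12 ∣ 12 := Nat.gcd_dvd_right m 12
      have hgpos : 0 < Nat.gcd m 12 := Nat.gcd_pos_of_pos_right m (by norm_num)
      have hgle : Nat.gcd m 12 < 13 := by
        have := Nat.le_of_dvd (by norm_num) hg
        omega
      have key : ∀ g < 13, g ∣ 12 → 16 ∣ Nat.fib g → g = 12 ∨ g = 0 := by decide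
      have hg12 : Nat.gcd m 12 = 12 := by
        rcases key _ hgle hg h16' with h' | h'
        · exact h'
        · omega
      have h12m : 12 ∣ m := by
        rw [← hg12]; exact Nat.gcd_dvd_left m 12
      have h144 : Nat.fib 12 ∣ Nat.fib m := Nat.fib_dvd 12 m h12m
      have h3 : 3 ∣ 2^a := by
        rw [← h]
        exact dvd_trans (by norm_num) h144
      have := Nat.Prime.dvd_of_dvd_pow (p := 3) (by norm_num) h3
      omega
  · rintro (h | h | h | h) <;> simp_all <;> decide
end

section
/- There is no solution in nonnegative integers m ≥ 1 and a of the equation F_{m+12} - F_m = 2^a. -/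
lemma fib_mod8 (m : ℕ) : Nat.fib (m + 12) % 8 = Nat.fib m % 8 := by
  have h := Nat.fib_add m 11
  have h11 : Nat.fib 11 = 89 := by decide
  have h12 : Nat.fib 12 = 144 := by decide
  rw [h11, h12] at h
  rw [show m + 12 = m + 11 + 1 by omega, h]
  omega

lemma key_mod8 : ∀ m, (11 * Nat.fib m + 18 * Nat.fib (m + 1)) % 8 ≠ 0 := by
  intro m
  induction m using Nat.strong_induction_on with
  | _ m ih =>
    rcases lt_or_ge m 12 with h | h
    · interval_cases m <;> decide
    · obtain ⟨k, rfl⟩ : ∃ k, m = k + 12 := ⟨m - 12, by omega⟩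
      have h1 := fib_mod8 k
      have h2 := fib_mod8 (k + 1)
      have h3 := ih k (by omega)
      rw [show k + 1 + 12 = k + 12 + 1 by omega] at h2
      omega

theorem fib_add_twelve_sub_fib_ne_pow_two (m a : ℕ) (hm : 1 ≤ m) :
    Nat.fib (m + 12) - Nat.fib m ≠ 2 ^ a := by
  intro h
  have hadd := Nat.fib_add m 11
  have h11 : Nat.fib 11 = 89 := by decide
  have h12 : Nat.fib 12 = 144 := by decide
  rw [h11, h12] at hadd
  rw [show m + 12 = m + 11 + 1 by omega, hadd] at h
  have hF : 1 ≤ Nat.fib m := Nat.fib_pos.mpr hm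
  have hG : 1 ≤ Nat.fib (m + 1) := Nat.fib_pos.mpr (by omega)
  have hk := key_mod8 m
  -- From h : 89 * F + 144 * G - F = 2 ^ a, i.e. 8 * (11F + 18G) = 2 ^ a
  have h8 : 8 * (11 * Nat.fib m + 18 * Nat.fib (m + 1)) = 2 ^ a := by omega
  have ha : 8 ≤ a := by
    by_contra hcon
    interval_cases a <;> omega
  obtain ⟨b, rfl⟩ : ∃ b, a = b + 8 := ⟨a - 8, by omega⟩
  rw [pow_add] at h8
  norm_num at h8
  omega
end

section
/- The only solutions in positive integers m and a of the equation F_{m+4} - F_m = 2^a are given by m = 1, a = 2. -/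
/-! $F_{m+4} - F_m = F_m + 3F_{m+1}$ (the Lucas number $L_{m+2}$). Modulo 8 the Fibonacci numbers
have period 12, and checking one period shows that $F_m + 3F_{m+1}$ is never divisible by 8, so the
power of two can only be $2^2$ (it is at least $F_0 + 3F_1 = 3$). As $F_m + 3F_{m+1}$ is strictly
increasing in $m$, the value $4$ is attained only at $m = 1$. -/

namespace Nat

open Function

theorem fib_add_four_sub_fib (m : ℕ) : fib (m + 4) - fib m = fib m + 3 * fib (m + 1) := by
  have h2 : fib (m + 2) = fib m + fib (m + 1) := fib_add_two
  have h3 : fib (m + 3) = fib (m + 1) + fib (m + 2) := fib_add_two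
  have h4 : fib (m + 4) = fib (m + 2) + fib (m + 3) := fib_add_two
  omega

theorem strictMono_fib_add_three_mul_fib_succ :
    StrictMono fun m => fib m + 3 * fib (m + 1) := by
  refine strictMono_nat_of_lt_succ fun m => ?_
  have hpos : 0 < fib (m + 2) := fib_pos.mpr (succ_pos _)
  have h2 : fib (m + 2) = fib m + fib (m + 1) := fib_add_two
  show fib m + 3 * fib (m + 1) < fib (m + 1) + 3 * fib (m + 2)
  omega

theorem periodic_fib_mod_eight : Periodic (fun n => fib n % 8) 12 := fun m => by
  -- $F_{m+12} = 89 F_m + 144 F_{m+1}$, with $89 ≡ 1$ and $144 ≡ 0 \pmod 8$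
  have h : fib (m + 12) = fib m * fib 11 + fib (m + 1) * fib 12 := fib_add m 11
  simp only [h, show fib 11 = 89 from rfl, show fib 12 = 144 from rfl]
  omega

theorem fib_add_three_mul_fib_succ_mod_eight_ne_zero (m : ℕ) :
    (fib m + 3 * fib (m + 1)) % 8 ≠ 0 := by
  have hper : Periodic (fun n => (fib n + 3 * fib (n + 1)) % 8) 12 := fun n => by
    have h0 := periodic_fib_mod_eight n
    have h1 := periodic_fib_mod_eight (n + 1)
    simp only [add_right_comm n 1 12] at h0 h1 ⊢
    omega
  rw [← hper.map_mod_nat m]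
  have hlt : m % 12 < 12 := mod_lt m (by norm_num)
  generalize m % 12 = r at hlt
  interval_cases r <;> decide

end Nat

theorem fib_add_four_sub_fib_eq_pow_two_general (m a : ℕ) :
    Nat.fib (m + 4) - Nat.fib m = 2 ^ a ↔ m = 1 ∧ a = 2 := by
  rw [Nat.fib_add_four_sub_fib]
  constructor
  · intro h
    have ha : a < 3 := by
      by_contra! ha
      have h8 : 8 ∣ 2 ^ a := by simpa using Nat.pow_dvd_pow 2 ha
      exact Nat.fib_add_three_mul_fib_succ_mod_eight_ne_zero m (h ▸ Nat.mod_eq_zero_of_dvd h8)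
    have hmono := Nat.strictMono_fib_add_three_mul_fib_succ
    have hge : 3 ≤ Nat.fib m + 3 * Nat.fib (m + 1) := hmono.monotone (Nat.zero_le m)
    interval_cases a
    · omega
    · omega
    · exact ⟨hmono.injective (h.trans rfl), rfl⟩
  · rintro ⟨rfl, rfl⟩
    rfl

theorem fib_add_four_sub_fib_eq_pow_two (m a : ℕ) (hm : 0 < m) (ha : 0 < a) :
    Nat.fib (m + 4) - Nat.fib m = 2 ^ a ↔ m = 1 ∧ a = 2 :=
  fib_add_four_sub_fib_eq_pow_two_general m a
end

section
/- For all integers n > m ≥ 0 with F_n - F_m = 2^a, one has |1 - 2^a · α^{-n} · √5| < 4/α^{n-m}, where α = (1+√5)/2. -/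
open Real goldenRatio

theorem abs_goldenConj_pow_le_one (k : ℕ) : |ψ ^ k| ≤ 1 := by
  rw [abs_pow]
  exact pow_le_one₀ (abs_nonneg ψ)
    (abs_le.2 ⟨neg_one_lt_goldenConj.le, goldenConj_neg.le.trans zero_le_one⟩)

theorem cast_fib_sub_fib_mul_sqrt_five {m n : ℕ} (hmn : m ≤ n) :
    ((Nat.fib n - Nat.fib m : ℕ) : ℝ) * √5 = φ ^ n - (φ ^ m + ψ ^ n - ψ ^ m) := by
  have hsqrt : √5 ≠ 0 := by positivity
  rw [Nat.cast_sub (Nat.fib_mono hmn), coe_fib_eq, coe_fib_eq]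
  field_simp
  ring

/-- By Binet's formula the error of approximating `(F_n - F_m) √5` by `φ ^ n` is
`φ ^ m + ψ ^ n - ψ ^ m`, of size at most `φ ^ m + 2 < 4 φ ^ m`. -/
theorem abs_one_sub_cast_fib_sub_fib_mul_sqrt_five_div_lt {m n : ℕ} (hmn : m ≤ n) :
    |1 - ((Nat.fib n - Nat.fib m : ℕ) : ℝ) * √5 / φ ^ n| < 4 / φ ^ (n - m) := by
  have hφn : 0 < φ ^ n := pow_pos goldenRatio_pos n
  have hφm : 1 ≤ φ ^ m := one_le_pow₀ one_lt_goldenRatio.le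
  have herror : |φ ^ m + ψ ^ n - ψ ^ m| ≤ φ ^ m + 2 := by
    have hψn := abs_le.1 (abs_goldenConj_pow_le_one n)
    have hψm := abs_le.1 (abs_goldenConj_pow_le_one m)
    rw [abs_le]
    constructor <;> linarith
  have hsplit : φ ^ n = φ ^ (n - m) * φ ^ m := by rw [← pow_add, Nat.sub_add_cancel hmn]
  rw [cast_fib_sub_fib_mul_sqrt_five hmn, one_sub_div hφn.ne', sub_sub_cancel, abs_div,
    abs_of_pos hφn, div_lt_div_iff₀ hφn (pow_pos goldenRatio_pos _), hsplit]
  nlinarith [pow_pos goldenRatio_pos (n - m)]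

theorem linear_form_bound (m n a : ℕ) (h : m < n)
    (heq : Nat.fib n - Nat.fib m = 2 ^ a) :
    |1 - (2 : ℝ) ^ a * ((1 + Real.sqrt 5) / 2) ^ (-(n : ℤ)) * Real.sqrt 5| <
      4 / ((1 + Real.sqrt 5) / 2) ^ (n - m) := by
  have hbound := abs_one_sub_cast_fib_sub_fib_mul_sqrt_five_div_lt h.le
  rw [heq, Nat.cast_pow, Nat.cast_ofNat] at hbound
  convert hbound using 3
  rw [zpow_neg, zpow_natCast]
  ring
end

section
/- For no nonnegative integers n > m and a does the equation α^n/√5 - α^m/√5 = 2^a hold, where α = (1+√5)/2. -/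
private def g (k : ℕ) : ℕ := Nat.fib (k+1) - Nat.fib k

private lemma g_succ (k : ℕ) : g (k+1) = Nat.fib k := by
  have h : Nat.fib (k+2) = Nat.fib k + Nat.fib (k+1) := Nat.fib_add_two
  show Nat.fib (k+2) - Nat.fib (k+1) = Nat.fib k
  omega

private lemma alpha_pow (k : ℕ) :
    ((1 + Real.sqrt 5)/2)^k = (Nat.fib k : ℝ) * ((1 + Real.sqrt 5)/2) + (g k : ℝ) := by
  have h5 : Real.sqrt 5 ^ 2 = 5 := Real.sq_sqrt (by norm_num)
  have hα : ((1 + Real.sqrt 5)/2)^2 = (1 + Real.sqrt 5)/2 + 1 := by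
    linear_combination h5 / 4
  induction k with
  | zero => simp [g]
  | succ k ih =>
    have hgN : Nat.fib (k+1) = g k + Nat.fib k := by
      have := Nat.fib_le_fib_succ (n := k)
      simp only [g]; omega
    have hfib : (Nat.fib (k+1) : ℝ) = (g k : ℝ) + (Nat.fib k : ℝ) := by
      exact_mod_cast hgN
    rw [pow_succ, ih, g_succ, hfib]
    linear_combination (Nat.fib k : ℝ) * hα

private lemma L_step (k : ℕ) (hk : 1 ≤ k) :
    Nat.fib k + 2 * g k < Nat.fib (k+1) + 2 * g (k+1) := by
  obtain ⟨j, rfl⟩ : ∃ j, k = j + 1 := ⟨k-1, by omega⟩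
  show Nat.fib (j+1) + 2 * g (j+1) < Nat.fib (j+2) + 2 * g (j+2)
  have h1 : g (j+1) = Nat.fib j := g_succ j
  have h2 : g (j+2) = Nat.fib (j+1) := g_succ (j+1)
  have hf : Nat.fib (j+2) = Nat.fib j + Nat.fib (j+1) := Nat.fib_add_two
  have hm : Nat.fib j ≤ Nat.fib (j+1) := Nat.fib_le_fib_succ
  have hp : 1 ≤ Nat.fib (j+1) := Nat.fib_pos.mpr (Nat.succ_pos j)
  omega

private lemma L_mono {m n : ℕ} (hm : 1 ≤ m) (h : m < n) :
    Nat.fib m + 2 * g m < Nat.fib n + 2 * g n := by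
  induction n with
  | zero => omega
  | succ n ih =>
    rcases Nat.lt_succ_iff_lt_or_eq.mp h with h' | rfl
    · exact lt_trans (ih h') (L_step n (by omega))
    · exact L_step m hm

private lemma L_ne {m n : ℕ} (h : m < n) :
    Nat.fib n + 2 * g n ≠ Nat.fib m + 2 * g m := by
  rcases Nat.eq_zero_or_pos m with rfl | hm
  · rcases n with _ | _ | j
    · omega
    · simp [g]
    · show Nat.fib (j+2) + 2 * g (j+2) ≠ Nat.fib 0 + 2 * g 0
      have h1 : g (j+2) = Nat.fib (j+1) := g_succ (j+1)
      have hf : Nat.fib (j+2) = Nat.fib j + Nat.fib (j+1) := Nat.fib_add_two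
      have hp : 1 ≤ Nat.fib (j+1) := Nat.fib_pos.mpr (Nat.succ_pos j)
      have h0 : Nat.fib 0 = 0 := rfl
      have hg0 : g 0 = 1 := rfl
      omega
  · exact Nat.ne_of_gt (L_mono hm h)

theorem alpha_diff_ne_pow_two (m n a : ℕ) (h : m < n) :
    ((1 + Real.sqrt 5) / 2) ^ n / Real.sqrt 5 - ((1 + Real.sqrt 5) / 2) ^ m / Real.sqrt 5 ≠
      (2 : ℝ) ^ a := by
  intro hE
  have h5 : Real.sqrt 5 ^ 2 = 5 := Real.sq_sqrt (by norm_num)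
  have hspos : (0:ℝ) < Real.sqrt 5 := Real.sqrt_pos.mpr (by norm_num)
  have hsne : Real.sqrt 5 ≠ 0 := ne_of_gt hspos
  have hirr : Irrational (Real.sqrt 5) := by
    have : Nat.Prime 5 := by norm_num
    simpa using this.irrational_sqrt
  have hE2 : ((1 + Real.sqrt 5)/2)^n - ((1 + Real.sqrt 5)/2)^m
      = 2^a * Real.sqrt 5 := by
    rw [div_sub_div_same, div_eq_iff hsne] at hE
    exact hE
  rw [alpha_pow n, alpha_pow m] at hE2
  set A : ℚ := (Nat.fib n : ℚ) - Nat.fib m + 2*(g n : ℚ) - 2*(g m : ℚ) with hA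
  set B : ℚ := 2^(a+1) - ((Nat.fib n : ℚ) - Nat.fib m) with hB
  have key : (A : ℝ) = (B : ℝ) * Real.sqrt 5 := by
    rw [hA, hB]
    push_cast
    linear_combination 2 * hE2
  by_cases hB0 : B = 0
  · have hA0 : A = 0 := by
      have : (A : ℝ) = 0 := by rw [key, hB0]; simp
      exact_mod_cast this
    have hq : (Nat.fib n : ℚ) + 2*(g n : ℚ) = (Nat.fib m : ℚ) + 2*(g m : ℚ) := by
      rw [hA] at hA0; linarith
    have hnat : Nat.fib n + 2 * g n = Nat.fib m + 2 * g m := by exact_mod_cast hq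
    exact L_ne h hnat
  · apply hirr
    refine ⟨A / B, ?_⟩
    have hBne : ((B : ℝ)) ≠ 0 := by exact_mod_cast hB0
    push_cast
    field_simp
    linear_combination key
end

section
/- The only solutions in nonnegative integers m, n, a with 0 ≤ m < n ≤ 200 of F_n - F_m = 2^a are the 16 tuples (n,m,a) = (3,1,0),(4,1,1),(5,1,2),(3,2,0),(4,3,0),(4,2,1),(5,2,2),(9,3,5),(5,4,1),(7,5,3),(8,5,4),(8,7,3),(1,0,0),(2,0,0),(3,0,1),(6,0,3). -/
def F : List ℕ := [0, 1, 1, 2, 3, 5, 8, 13, 21, 34, 55, 89, 144, 233, 377, 610, 987, 1597, 2584, 4181, 6765, 10946, 17711, 28657, 46368, 75025, 121393, 196418, 317811, 514229, 832040, 1346269, 2178309, 3524578, 5702887, 9227465, 14930352, 24157817, 39088169, 63245986, 102334155, 165580141, 267914296, 433494437, 701408733, 1134903170, 1836311903, 2971215073, 4807526976, 7778742049, 12586269025, 20365011074, 32951280099, 53316291173, 86267571272, 139583862445, 225851433717, 365435296162, 591286729879, 956722026041, 1548008755920, 2504730781961, 4052739537881, 6557470319842, 10610209857723, 17167680177565,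 27777890035288, 44945570212853, 72723460248141, 117669030460994, 190392490709135, 308061521170129, 498454011879264, 806515533049393, 1304969544928657, 2111485077978050, 3416454622906707, 5527939700884757, 8944394323791464, 14472334024676221, 23416728348467685, 37889062373143906, 61305790721611591, 99194853094755497, 160500643816367088, 259695496911122585, 420196140727489673, 679891637638612258, 1100087778366101931, 1779979416004714189, 2880067194370816120, 4660046610375530309, 7540113804746346429, 12200160415121876738, 19740274219868223167, 31940434634990099905, 51680708854858323072, 83621143489848422977, 135301852344706746049, 218922995834555169026, 354224848179261915075, 573147844013817084101, 927372692193078999176, 1500520536206896083277, 2427893228399975082453, 3928413764606871165730, 6356306993006846248183, 10284720757613717413913, 16641027750620563662096, 26925748508234281076009, 43566776258854844738105, 70492524767089125814114, 114059301025943970552219, 184551825793033096366333, 298611126818977066918552, 483162952612010163284885, 781774079430987230203437, 1264937032042997393488322, 2046711111473984623691759, 3311648143516982017180081, 5358359254990966640871840, 8670007398507948658051921, 14028366653498915298923761, 22698374052006863956975682, 36726740705505779255899443, 59425114757512643212875125, 96151855463018422468774568, 155576970220531065681649693, 251728825683549488150424261, 407305795904080553832073954, 659034621587630041982498215, 1066340417491710595814572169,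 1725375039079340637797070384, 2791715456571051233611642553, 4517090495650391871408712937, 7308805952221443105020355490, 11825896447871834976429068427, 19134702400093278081449423917, 30960598847965113057878492344, 50095301248058391139327916261, 81055900096023504197206408605, 131151201344081895336534324866, 212207101440105399533740733471, 343358302784187294870275058337, 555565404224292694404015791808, 898923707008479989274290850145, 1454489111232772683678306641953, 2353412818241252672952597492098, 3807901929474025356630904134051, 6161314747715278029583501626149, 9969216677189303386214405760200, 16130531424904581415797907386349, 26099748102093884802012313146549, 42230279526998466217810220532898, 68330027629092351019822533679447, 110560307156090817237632754212345, 178890334785183168257455287891792, 289450641941273985495088042104137, 468340976726457153752543329995929, 757791618667731139247631372100066, 1226132595394188293000174702095995, 1983924214061919432247806074196061, 3210056809456107725247980776292056, 5193981023518027157495786850488117, 8404037832974134882743767626780173, 13598018856492162040239554477268290, 22002056689466296922983322104048463, 35600075545958458963222876581316753, 57602132235424755886206198685365216, 93202207781383214849429075266681969, 150804340016807970735635273952047185, 244006547798191185585064349218729154, 394810887814999156320699623170776339, 638817435613190341905763972389505493, 1033628323428189498226463595560281832, 1672445759041379840132227567949787325, 2706074082469569338358691163510069157, 4378519841510949178490918731459856482,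 7084593923980518516849609894969925639, 11463113765491467695340528626429782121, 18547707689471986212190138521399707760, 30010821454963453907530667147829489881, 48558529144435440119720805669229197641, 78569350599398894027251472817058687522, 127127879743834334146972278486287885163, 205697230343233228174223751303346572685, 332825110087067562321196029789634457848, 538522340430300790495419781092981030533, 871347450517368352816615810882615488381, 1409869790947669143312035591975596518914, 2281217241465037496128651402858212007295, 3691087032412706639440686994833808526209, 5972304273877744135569338397692020533504, 9663391306290450775010025392525829059713, 15635695580168194910579363790217849593217, 25299086886458645685589389182743678652930, 40934782466626840596168752972961528246147, 66233869353085486281758142155705206899077, 107168651819712326877926895128666735145224, 173402521172797813159685037284371942044301, 280571172992510140037611932413038677189525]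

def ip : ℕ → ℕ → Bool
  | 0, _ => false
  | f+1, d => d == 1 || (d % 2 == 0 && d != 0 && ip f (d/2))

def pairOK (n m : ℕ) : Bool :=
  (n, m) ∈ [(3,1),(4,1),(5,1),(3,2),(4,3),(4,2),(5,2),(9,3),(5,4),(7,5),(8,5),(8,7),(1,0),(2,0),(3,0),(6,0)]

def innerB (fn n : ℕ) : ℕ → List ℕ → Bool
  | _, [] => true
  | m, fm :: rest =>
      m == n || ((!(ip 200 (fn - fm)) || pairOK n m) && innerB fn n (m+1) rest)

def outerB : ℕ → List ℕ → Bool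
  | _, [] => true
  | n, fn :: rest => innerB fn n 0 F && outerB (n+1) rest

set_option maxRecDepth 100000 in
theorem hF : F = (List.range 201).map Nat.fib := by decide

set_option maxRecDepth 100000 in
set_option maxHeartbeats 100000000 in
theorem hchk : outerB 0 F = true := by decide

theorem ip_pow : ∀ f a, a < f → ip f (2^a) = true := by
  intro f
  induction f with
  | zero => omega
  | succ f ih =>
    intro a ha
    cases a with
    | zero => simp [ip]
    | succ a =>
      have h1 : (2:ℕ)^(a+1) ≠ 1 := by
        have := Nat.one_lt_two_pow (n := a+1) (by omega); omega
      have h2 : (2:ℕ)^(a+1) % 2 = 0 := by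
        rw [pow_succ]; omega
      have h3 : (2:ℕ)^(a+1) ≠ 0 := by positivity
      have h4 : (2:ℕ)^(a+1) / 2 = 2^a := by rw [pow_succ]; omega
      simp only [ip, h1, h2, h3, h4, beq_iff_eq, if_true]
      simp [h1, h2, h3, ih a (by omega)]

theorem innerB_spec : ∀ (l : List ℕ) (m fn n : ℕ), innerB fn n m l = true →
    ∀ j fm, m + j < n → l[j]? = some fm →
      (!(ip 200 (fn - fm)) || pairOK n (m + j)) = true := by
  intro l
  induction l with
  | nil => intro m fn n _ j fm _ hg; simp at hg
  | cons x rest ih =>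
    intro m fn n hin j fm hlt hg
    rw [innerB] at hin
    have hmn : (m == n) = false := by
      simp only [beq_eq_false_iff_ne, ne_eq]; omega
    rw [hmn, Bool.false_or, Bool.and_eq_true] at hin
    cases j with
    | zero =>
      simp only [List.getElem?_cons_zero, Option.some.injEq] at hg
      subst hg
      simpa using hin.1
    | succ j =>
      simp only [List.getElem?_cons_succ] at hg
      have := ih (m+1) fn n hin.2 j fm (by omega) hg
      have he : m + 1 + j = m + (j + 1) := by omega
      rwa [he] at this

theorem outerB_spec : ∀ (l : List ℕ) (n0 : ℕ), outerB n0 l = true →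
    ∀ i fn, l[i]? = some fn → innerB fn (n0 + i) 0 F = true := by
  intro l
  induction l with
  | nil => intro n0 _ i fn hg; simp at hg
  | cons x rest ih =>
    intro n0 hout i fn hg
    rw [outerB, Bool.and_eq_true] at hout
    cases i with
    | zero =>
      simp only [List.getElem?_cons_zero, Option.some.injEq] at hg
      subst hg
      simpa using hout.1
    | succ i =>
      simp only [List.getElem?_cons_succ] at hg
      have := ih (n0+1) hout.2 i fn hg
      have he : n0 + 1 + i = n0 + (i + 1) := by omega
      rwa [he] at this

theorem getF (n : ℕ) (hn : n < 201) : F[n]? = some (Nat.fib n) := by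
  rw [hF, List.getElem?_map, List.getElem?_range hn, Option.map_some]

set_option maxRecDepth 100000 in
theorem fib200lt : Nat.fib 200 < 2 ^ 200 := by decide

theorem two_pow_inj {a b : ℕ} (h : (2:ℕ)^a = 2^b) : a = b :=
  Nat.pow_right_injective (by norm_num) h

set_option maxRecDepth 20000 in
set_option maxHeartbeats 10000000 in
theorem fib_sub_fib_eq_pow_two_small (m n a : ℕ) (h : m < n) (hn : n ≤ 200) :
    Nat.fib n - Nat.fib m = 2 ^ a ↔
      (n, m, a) ∈ ({(3,1,0),(4,1,1),(5,1,2),(3,2,0),(4,3,0),(4,2,1),(5,2,2),(9,3,5),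
        (5,4,1),(7,5,3),(8,5,4),(8,7,3),(1,0,0),(2,0,0),(3,0,1),(6,0,3)} :
        Set (ℕ × ℕ × ℕ)) := by
  constructor
  · intro hd
    have ha : a < 200 := by
      by_contra hc
      have h1 : 2 ^ a ≤ Nat.fib 200 := by
        rw [← hd]; exact (Nat.sub_le _ _).trans (Nat.fib_mono hn)
      have h2 : 2 ^ 200 ≤ 2 ^ a := Nat.pow_le_pow_right (by norm_num) (by omega)
      have h3 : Nat.fib 200 < 2 ^ 200 := fib200lt
      omega
    have hip : ip 200 (Nat.fib n - Nat.fib m) = true := by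
      rw [hd]; exact ip_pow 200 a ha
    have hin : innerB (Nat.fib n) n 0 F = true := by
      have := outerB_spec F 0 hchk n (Nat.fib n) (getF n (by omega))
      rwa [Nat.zero_add] at this
    have hdis := innerB_spec F 0 (Nat.fib n) n hin m (Nat.fib m) (by omega)
      (getF m (by omega))
    rw [hip] at hdis
    simp only [Bool.not_true, Bool.false_or, Nat.zero_add] at hdis
    have hpk : pairOK n m = true := hdis
    rw [pairOK] at hpk
    simp only [List.mem_cons, List.mem_singleton, Prod.mk.injEq, List.not_mem_nil,
      or_false, decide_eq_true_eq] at hpk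
    simp only [Set.mem_insert_iff, Set.mem_singleton_iff, Prod.mk.injEq]
    rcases hpk with ⟨rfl,rfl⟩|⟨rfl,rfl⟩|⟨rfl,rfl⟩|⟨rfl,rfl⟩|⟨rfl,rfl⟩|⟨rfl,rfl⟩|⟨rfl,rfl⟩|⟨rfl,rfl⟩|⟨rfl,rfl⟩|⟨rfl,rfl⟩|⟨rfl,rfl⟩|⟨rfl,rfl⟩|⟨rfl,rfl⟩|⟨rfl,rfl⟩|⟨rfl,rfl⟩|⟨rfl,rfl⟩ <;>
      [(have : a = 0 := two_pow_inj (by rw [← hd]; decide));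
       (have : a = 1 := two_pow_inj (by rw [← hd]; decide));
       (have : a = 2 := two_pow_inj (by rw [← hd]; decide));
       (have : a = 0 := two_pow_inj (by rw [← hd]; decide));
       (have : a = 0 := two_pow_inj (by rw [← hd]; decide));
       (have : a = 1 := two_pow_inj (by rw [← hd]; decide));
       (have : a = 2 := two_pow_inj (by rw [← hd]; decide));
       (have : a = 5 := two_pow_inj (by rw [← hd]; decide));
       (have : a = 1 := two_pow_inj (by rw [← hd]; decide));
       (have : a = 3 := two_pow_inj (by rw [← hd]; decide));
       (have : a = 4 := two_pow_inj (by rw [← hd]; decide));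
       (have : a = 3 := two_pow_inj (by rw [← hd]; decide));
       (have : a = 0 := two_pow_inj (by rw [← hd]; decide));
       (have : a = 0 := two_pow_inj (by rw [← hd]; decide));
       (have : a = 1 := two_pow_inj (by rw [← hd]; decide));
       (have : a = 3 := two_pow_inj (by rw [← hd]; decide))] <;>
      subst this <;> simp
  · intro hmem
    simp only [Set.mem_insert_iff, Set.mem_singleton_iff, Prod.mk.injEq] at hmem
    rcases hmem with ⟨rfl,rfl,rfl⟩|⟨rfl,rfl,rfl⟩|⟨rfl,rfl,rfl⟩|⟨rfl,rfl,rfl⟩|⟨rfl,rfl,rfl⟩|⟨rfl,rfl,rfl⟩|⟨rfl,rfl,rfl⟩|⟨rfl,rfl,rfl⟩|⟨rfl,rfl,rfl⟩|⟨rfl,rfl,rfl⟩|⟨rfl,rfl,rfl⟩|⟨rfl,rfl,rfl⟩|⟨rfl,rfl,rfl⟩|⟨rfl,rfl,rfl⟩|⟨rfl,rfl,rfl⟩|⟨rfl,rfl,rfl⟩ <;> decide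
end
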